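/- arXiv:1601.01928 — 2 statements merged into one kernel-verified Lean document; each statement's English description precedes it below -/
import Mathlib

section
/- In any firing sequence of a workflow net, if transition t unconditionally enables cluster c with c ≠ [t], then between any two occurrences of t there is an occurrence of some transition of c. -/
open Classical in
noncomputable def fire {N : Type*} (F : N → N → Prop) (M : N → ℕ) (t : N) : N → ℕ :=
  fun p => M p - (if F p t then 1 else 0) + (if F t p then 1 else 0)

def Enabled {N : Type*} (P : Set N) (F : N → N → Prop) (t : N) (M : N → ℕ) : Prop :=
  ∀ p ∈ P, F p t → 1 ≤ M p

/-- In any firing sequence of a 1-safe workflow net, if transition `t`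
unconditionally enables a cluster `c` with `c ≠ [t]`, then between any two
occurrences of `t` there is an occurrence of some transition of `c`. The firing
sequence is given by its transitions `w 0, …, w (n-1)` and the intermediate
markings `Ms 0, …, Ms n`. -/
theorem occurrence_of_cluster_between {N : Type*} (P T : Set N) (F : N → N → Prop)
    (c : Set N) (t : N) (ht : t ∈ T) (htc : t ∉ c)
    -- all transitions consuming from places of `c` belong to `c`
    -- (true by definition of cluster):
    (hclosed : ∀ p ∈ c ∩ P, ∀ u ∈ T, F p u → u ∈ c)
    -- `t` unconditionally enables `c`:
    (huncond : ∀ p ∈ c ∩ P, F t p)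
    (hne : (c ∩ P).Nonempty)
    -- the firing sequence and its markings:
    (n : ℕ) (w : ℕ → N) (Ms : ℕ → (N → ℕ))
    (hw : ∀ j < n, w j ∈ T)
    (hstep : ∀ j < n, Enabled P F (w j) (Ms j) ∧ Ms (j + 1) = fire F (Ms j) (w j))
    -- initially no token on the places of `c`:
    (hinit : ∀ p ∈ c ∩ P, Ms 0 p = 0)
    -- 1-safety: every marking along the sequence has at most one token per place:
    (hsafe : ∀ j ≤ n, ∀ p ∈ P, Ms j p ≤ 1) :
    ∀ j k, j < k → k < n → w j = t → w k = t →
      ∃ m, j < m ∧ m < k ∧ w m ∈ c ∩ T := by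
  intro j k hjk hkn hwj hwk
  obtain ⟨p, hpc⟩ := hne
  have hpP : p ∈ P := hpc.2
  have hFtp : F t p := huncond p hpc
  have hFpt : ¬ F p t := fun h => htc (hclosed p hpc t ht h)
  -- after step j, p holds a token
  have hj1 : 1 ≤ Ms (j + 1) p := by
    have h := (hstep j (hjk.trans hkn)).2
    rw [h, hwj, fire]
    simp [hFpt, hFtp]
  -- before step k, p holds no token
  have hk0 : Ms k p = 0 := by
    by_contra h
    have h1 : 1 ≤ Ms k p := Nat.one_le_iff_ne_zero.mpr h
    have hke := (hstep k hkn).2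
    rw [hwk] at hke
    have h2 : Ms (k + 1) p = Ms k p + 1 := by
      rw [hke, fire]
      simp [hFpt, hFtp]
    have := hsafe (k + 1) hkn p hpP
    omega
  -- there must be a decrease between j+1 and k
  have key : ∃ m, j + 1 ≤ m ∧ m < k ∧ Ms (m + 1) p < Ms m p := by
    by_contra h
    push_neg at h
    have mono : ∀ d, j + 1 + d ≤ k → 1 ≤ Ms (j + 1 + d) p := by
      intro d
      induction d with
      | zero => intro _; exact hj1
      | succ d ih =>
        intro hd
        have h1 : j + 1 + d < k := by omega
        have := h (j + 1 + d) (by omega) h1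
        have := ih (by omega)
        have : 1 ≤ Ms (j + 1 + d + 1) p := by omega
        simpa [Nat.add_assoc] using this
    have := mono (k - (j + 1)) (by omega)
    rw [show j + 1 + (k - (j + 1)) = k by omega] at this
    omega
  obtain ⟨m, hm1, hm2, hdec⟩ := key
  have hmn : m < n := by omega
  have hme := (hstep m hmn).2
  have hFpwm : F p (w m) := by
    by_contra hF
    rw [hme] at hdec
    simp only [fire] at hdec
    by_cases hG : F (w m) p <;> simp [hF, hG] at hdec <;> omega
  exact ⟨m, by omega, hm2, hclosed p hpc (w m) (hw m hmn) hFpwm, hw m hmn⟩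
end

section
/- If the initial marking i of the extended net N of a sound workflow net admits a firing sequence i →σ i containing every transition of N, then every proper (nonempty) trap of N is marked at i. -/
def FiresTo {N : Type*} (P : Set N) (F : N → N → Prop) :
    (N → ℕ) → List N → (N → ℕ) → Prop
  | M, [], M' => M = M'
  | M, t :: σ, M' => Enabled P F t M ∧ FiresTo P F (fire F M t) σ M'

/-- `R` is a trap of the net: every transition consuming from `R` produces into `R`. -/
def IsTrap {N : Type*} (P Ts : Set N) (F : N → N → Prop) (R : Set N) : Prop :=
  R ⊆ P ∧ ∀ t ∈ Ts, (∃ p ∈ R, F p t) → ∃ p ∈ R, F t p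

/-- once a trap is marked it stays marked -/
lemma trap_stays_marked {N : Type*} (P T : Set N) (F : N → N → Prop)
    (R : Set N) (hR : IsTrap P T F R) :
    ∀ (σ : List N) (M M' : N → ℕ), (∀ t ∈ σ, t ∈ T) → FiresTo P F M σ M' →
      (∃ p ∈ R, 1 ≤ M p) → ∃ p ∈ R, 1 ≤ M' p := by
  intro σ
  induction σ with
  | nil => intro M M' _ h hm; cases h; exact hm
  | cons t σ ih =>
    intro M M' hT hf hm
    obtain ⟨_, hf⟩ := hf
    refine ih (fire F M t) M' (fun s hs => hT s (List.mem_cons_of_mem _ hs)) hf ?_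
    obtain ⟨p, hp, hMp⟩ := hm
    by_cases hprod : ∃ q ∈ R, F t q
    · obtain ⟨q, hq, hFq⟩ := hprod
      refine ⟨q, hq, ?_⟩
      simp [fire, hFq]
    · have hnc : ¬ F p t := fun h =>
        hprod (hR.2 t (hT t List.mem_cons_self) ⟨p, hp, h⟩)
      refine ⟨p, hp, ?_⟩
      simp only [fire, hnc, if_false]
      omega

/-- once a transition producing into the trap fires, the trap is marked at the end -/
lemma trap_marked_after {N : Type*} (P T : Set N) (F : N → N → Prop)
    (R : Set N) (hR : IsTrap P T F R) :
    ∀ (σ : List N) (M M' : N → ℕ), (∀ t ∈ σ, t ∈ T) → FiresTo P F M σ M' →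
      (∃ t ∈ σ, ∃ p ∈ R, F t p) → ∃ p ∈ R, 1 ≤ M' p := by
  intro σ
  induction σ with
  | nil => intro M M' _ _ hm; simp at hm
  | cons t σ ih =>
    intro M M' hT hf hm
    obtain ⟨_, hf⟩ := hf
    obtain ⟨s, hs, p, hp, hFsp⟩ := hm
    rcases List.mem_cons.mp hs with rfl | hs'
    · refine trap_stays_marked P T F R hR σ (fire F M s) M'
        (fun u hu => hT u (List.mem_cons_of_mem _ hu)) hf ⟨p, hp, ?_⟩
      simp [fire, hFsp]
    · exact ih (fire F M t) M' (fun u hu => hT u (List.mem_cons_of_mem _ hu)) hf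
        ⟨s, hs', p, hp, hFsp⟩

/-- If the marking `Mi` of the extended net `N` admits a firing sequence
`Mi →σ Mi` containing every transition of `N` (as exists for a sound workflow
net), then every proper (nonempty) trap of `N` is marked at `Mi`. -/
theorem covering_loop_marks_traps {N : Type*} (P T : Set N) (F : N → N → Prop)
    (hPT : Disjoint P T)
    (hF : ∀ a b, F a b → (a ∈ P ∧ b ∈ T) ∨ (a ∈ T ∧ b ∈ P))
    -- every place has an input transition (true in the strongly connected extended net):
    (hIn : ∀ p ∈ P, ∃ t ∈ T, F t p)
    (Mi : N → ℕ) (σ : List N)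
    (hσT : ∀ t ∈ σ, t ∈ T)
    (hcover : ∀ t ∈ T, t ∈ σ)
    (hfire : FiresTo P F Mi σ Mi) :
    ∀ R : Set N, R.Nonempty → IsTrap P T F R → ∃ p ∈ R, 1 ≤ Mi p := by
  intro R ⟨p, hp⟩ hR
  obtain ⟨t, htT, htp⟩ := hIn p (hR.1 hp)
  exact trap_marked_after P T F R hR σ Mi Mi hσT hfire ⟨t, hcover t htT, p, hp, htp⟩
end
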